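/- arXiv:2602.05030 — 6 statements merged into one kernel-verified Lean document; each statement's English description precedes it below -/
import Mathlib

section
/- Let H be a tree-based hierarchy with canonical aggregation matrix A, positive initial predictions ŷ, and top-heavy weight matrices W(M). Then for every item n the limit y*_n := lim_{M→∞} y_n(M) exists and is finite, and for every constraint k and every child s ∈ C_k, y*_s = (ŷ_s / Σ_{c∈C_k} ŷ_c) · y*_{p_k}; that is, the limit corresponds to share-based disaggregation with shares proportional to ŷ. -/
/-!
Right-multiplying `W(M)⁻¹ Aᵀ` by an invertible matrix does not change `y(M)`. Scaling
constraint `k` by `M ^ H(p_k) / M` turns it into `diag(ŷ) D(1/M)ᵀ`, where `D(t)` is `A` with its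
parent entries `1` replaced by `t`. As `M → ∞` this tends to `diag(ŷ) D(0)ᵀ`, and
`A diag(ŷ) D(0)ᵀ` is invertible: its `(k, j)` entry vanishes unless `k = j` (where it is
`∑_{c ∈ C_k} ŷ_c > 0`) or `p_k ∈ C_j`, so it is triangular once constraints are ordered by the
height of their parents. Continuity of the matrix inverse then gives the limit `y*`, which still
satisfies `A y* = 0` and equals `ŷ` times a constant on each child set `C_k`; summing over `C_k`
identifies that constant as `y*_{p_k} / ∑_{c ∈ C_k} ŷ_c`.
-/

open Matrix Filter Topology

/-- A tree-based hierarchy in canonical form on items `Fin N` with `K` constraints.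
Constraint `k` has parent item `parent k` and nonempty child set `children k`;
each item is a child in at most one constraint, and the height function satisfies
`H(c) = H(p_k) - 1` (equivalently `H(p_k) = H(c) + 1`) for every child `c` of `p_k`. -/
structure TreeHierarchy (N K : ℕ) where
  parent : Fin K → Fin N
  children : Fin K → Finset (Fin N)
  children_nonempty : ∀ k, (children k).Nonempty
  parent_notMem : ∀ k, parent k ∉ children k
  child_unique : ∀ k j : Fin K, ∀ n : Fin N, n ∈ children k → n ∈ children j → k = j
  height : Fin N → ℕ
  height_child : ∀ k : Fin K, ∀ c ∈ children k, height (parent k) = height c + 1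

variable {N K : ℕ}

/-- The canonical aggregation matrix of a tree-based hierarchy:
`A k (p_k) = 1`, `A k c = -1` for `c ∈ C_k`, and `0` otherwise. -/
noncomputable def aggMatrix (T : TreeHierarchy N K) : Matrix (Fin K) (Fin N) ℝ :=
  fun k n => if n = T.parent k then 1 else if n ∈ T.children k then -1 else 0

/-- The top-heavy weight matrix: diagonal with entries `w_n(M) = M^(H n) / yhat n`. -/
noncomputable def topW (T : TreeHierarchy N K) (yhat : Fin N → ℝ) (M : ℝ) :
    Matrix (Fin N) (Fin N) ℝ :=
  Matrix.diagonal fun n => M ^ T.height n / yhat n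

/-- `λ(M) = (A W(M)⁻¹ Aᵀ)⁻¹ A ŷ`. -/
noncomputable def lamTop (T : TreeHierarchy N K) (yhat : Fin N → ℝ) (M : ℝ) : Fin K → ℝ :=
  (aggMatrix T * (topW T yhat M)⁻¹ * (aggMatrix T)ᵀ)⁻¹.mulVec ((aggMatrix T).mulVec yhat)

/-- `y(M) = ŷ - W(M)⁻¹ Aᵀ λ(M)`. -/
noncomputable def yTop (T : TreeHierarchy N K) (yhat : Fin N → ℝ) (M : ℝ) : Fin N → ℝ :=
  yhat - ((topW T yhat M)⁻¹ * (aggMatrix T)ᵀ).mulVec (lamTop T yhat M)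

namespace Matrix

theorem det_eq_prod_diag_of_offDiag_lt {κ R α : Type*} [Fintype κ] [DecidableEq κ] [CommRing R]
    [LinearOrder α] (M : Matrix κ κ R) (b : κ → α)
    (h : ∀ i j, i ≠ j → M i j ≠ 0 → b i < b j) :
    M.det = ∏ i, M i i := by
  have hM : M.BlockTriangular b := fun i j hji => by
    by_contra hne
    exact (h i j (fun e => (e ▸ hji).false) hne).not_gt hji
  have hblock (a : α) : M.toSquareBlock b a = diagonal fun i : {i // b i = a} => M i i := by
    ext ⟨i, hi⟩ ⟨j, hj⟩
    rcases eq_or_ne i j with rfl | hij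
    · simp [toSquareBlock_def]
    · rw [toSquareBlock_def, of_apply, diagonal_apply_ne _ (by simpa using hij)]
      by_contra hne
      exact (h i j hij hne).ne (hi.trans hj.symm)
  classical
  rw [hM.det, ← Finset.prod_fiberwise_of_maps_to fun i _ =>
    Finset.mem_image_of_mem b (Finset.mem_univ i)]
  refine Finset.prod_congr rfl fun a _ => ?_
  rw [hblock a, det_diagonal]
  exact (Finset.prod_subtype _ (fun _ => Finset.mem_filter_univ _) fun i => M i i).symm

variable {ι κ R : Type*} [Fintype ι] [Fintype κ] [DecidableEq κ] [CommRing R]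

/-- The correction of `v` along the columns of `P` that solves the constraints `A *ᵥ y = 0`
(when `A * P` is invertible). -/
noncomputable def reconcile (A : Matrix κ ι R) (P : Matrix ι κ R) (v : ι → R) : ι → R :=
  v - P *ᵥ ((A * P)⁻¹ *ᵥ (A *ᵥ v))

theorem reconcile_mul_right (A : Matrix κ ι R) (P : Matrix ι κ R) {E : Matrix κ κ R}
    (hE : IsUnit E.det) (v : ι → R) : reconcile A (P * E) v = reconcile A P v := by
  rw [reconcile, reconcile, ← Matrix.mul_assoc, mul_inv_rev, mulVec_mulVec, mulVec_mulVec,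
    mulVec_mulVec, mulVec_mulVec, ← Matrix.mul_assoc, Matrix.mul_assoc P, mul_nonsing_inv _ hE,
    Matrix.mul_one]

theorem mulVec_reconcile (A : Matrix κ ι R) {P : Matrix ι κ R} (hAP : IsUnit (A * P).det)
    (v : ι → R) : A *ᵥ reconcile A P v = 0 := by
  rw [reconcile, mulVec_sub, mulVec_mulVec, mulVec_mulVec, mul_nonsing_inv _ hAP, one_mulVec,
    sub_self]

theorem continuousAt_reconcile {𝕜 : Type*} [Field 𝕜] [TopologicalSpace 𝕜] [IsTopologicalRing 𝕜]
    [ContinuousInv₀ 𝕜] (A : Matrix κ ι 𝕜) {P : Matrix ι κ 𝕜} (hAP : IsUnit (A * P).det)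
    (v : ι → 𝕜) : ContinuousAt (fun Q => reconcile A Q v) P := by
  have hinv : ContinuousAt (fun Q : Matrix ι κ 𝕜 => (A * Q)⁻¹) P := by
    refine ContinuousAt.comp (g := Inv.inv) (continuousAt_matrix_inv _ ?_) (by fun_prop)
    rw [Ring.inverse_eq_inv']
    exact continuousAt_inv₀ hAP.ne_zero
  have hcont : Continuous fun QX : Matrix ι κ 𝕜 × Matrix κ κ 𝕜 =>
      v - QX.1 *ᵥ (QX.2 *ᵥ (A *ᵥ v)) := by
    fun_prop
  exact hcont.continuousAt.comp (continuousAt_id.prodMk hinv)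

end Matrix

namespace TreeHierarchy

variable (T : TreeHierarchy N K)

noncomputable def scaledAgg (t : ℝ) : Matrix (Fin K) (Fin N) ℝ :=
  fun k n => if n = T.parent k then t else if n ∈ T.children k then -1 else 0

theorem continuous_scaledAgg : Continuous T.scaledAgg :=
  continuous_pi fun k => continuous_pi fun n => by
    unfold scaledAgg
    split_ifs <;> fun_prop

theorem scaledAgg_zero_apply (k : Fin K) (n : Fin N) :
    T.scaledAgg 0 k n = if n ∈ T.children k then -1 else 0 := by
  unfold scaledAgg
  split_ifs with hp hc <;> first | rfl | exact absurd (hp ▸ hc) (T.parent_notMem k)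

theorem aggMatrix_mulVec_apply (v : Fin N → ℝ) (k : Fin K) :
    (aggMatrix T *ᵥ v) k = v (T.parent k) - ∑ c ∈ T.children k, v c := by
  have hterm (n : Fin N) : aggMatrix T k n * v n
      = (if n = T.parent k then v n else 0) - if n ∈ T.children k then v n else 0 := by
    rcases eq_or_ne n (T.parent k) with rfl | hp
    · simp [aggMatrix, T.parent_notMem k]
    · by_cases hc : n ∈ T.children k <;> simp [aggMatrix, hp, hc]
  rw [mulVec, dotProduct, Finset.sum_congr rfl fun n _ => hterm n, Finset.sum_sub_distrib,
    Finset.sum_ite_eq', Finset.sum_ite_mem, Finset.univ_inter, if_pos (Finset.mem_univ _)]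

theorem topW_inv (yhat : Fin N → ℝ) (hy : ∀ n, yhat n ≠ 0) {M : ℝ} (hM : M ≠ 0) :
    (topW T yhat M)⁻¹ = diagonal fun n => yhat n / M ^ T.height n := by
  refine inv_eq_left_inv ?_
  rw [topW, diagonal_mul_diagonal, ← diagonal_one]
  congr 1
  funext n
  have := hy n
  have := pow_ne_zero (T.height n) hM
  field_simp

theorem topW_inv_mul_transpose_mul_diagonal (yhat : Fin N → ℝ) (hy : ∀ n, yhat n ≠ 0) {M : ℝ}
    (hM : M ≠ 0) :
    (topW T yhat M)⁻¹ * (aggMatrix T)ᵀ * diagonal (fun k => M ^ T.height (T.parent k) / M)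
      = diagonal yhat * (T.scaledAgg M⁻¹)ᵀ := by
  ext n k
  rw [topW_inv T yhat hy hM, mul_diagonal, diagonal_mul, diagonal_mul, transpose_apply,
    transpose_apply, aggMatrix, scaledAgg]
  have := pow_ne_zero (T.height n) hM
  split_ifs with hp hc
  · subst hp; field_simp
  · rw [T.height_child k n hc, pow_succ]; field_simp
  · simp

theorem yTop_eq_reconcile (yhat : Fin N → ℝ) (hy : ∀ n, yhat n ≠ 0) {M : ℝ} (hM : M ≠ 0) :
    yTop T yhat M = reconcile (aggMatrix T) (diagonal yhat * (T.scaledAgg M⁻¹)ᵀ) yhat := by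
  rw [← topW_inv_mul_transpose_mul_diagonal T yhat hy hM, reconcile_mul_right]
  · rw [yTop, lamTop, reconcile, Matrix.mul_assoc (aggMatrix T)]
  · rw [det_diagonal]
    exact (Finset.prod_ne_zero_iff.2 fun k _ => div_ne_zero (pow_ne_zero _ hM) hM).isUnit

theorem aggMatrix_mul_diagonal_mul_scaledAgg_zero_apply (yhat : Fin N → ℝ) (k j : Fin K) :
    (aggMatrix T * (diagonal yhat * (T.scaledAgg 0)ᵀ)) k j
      = ∑ c ∈ T.children k, (if c ∈ T.children j then yhat c else 0)
        - if T.parent k ∈ T.children j then yhat (T.parent k) else 0 := by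
  have hcol : (aggMatrix T * (diagonal yhat * (T.scaledAgg 0)ᵀ)) k j
      = -(aggMatrix T *ᵥ fun n => if n ∈ T.children j then yhat n else 0) k := by
    rw [mul_apply, mulVec, dotProduct, ← Finset.sum_neg_distrib]
    simp only [diagonal_mul, transpose_apply, scaledAgg_zero_apply]
    refine Finset.sum_congr rfl fun n _ => ?_
    split_ifs <;> ring
  rw [hcol, aggMatrix_mulVec_apply]
  ring

theorem isUnit_det_aggMatrix_mul_diagonal_mul_scaledAgg_zero (yhat : Fin N → ℝ)
    (hy : ∀ n, 0 < yhat n) : IsUnit (aggMatrix T * (diagonal yhat * (T.scaledAgg 0)ᵀ)).det := by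
  rw [det_eq_prod_diag_of_offDiag_lt _ fun k => T.height (T.parent k)]
  · refine (Finset.prod_pos fun k _ => ?_).ne'.isUnit
    rw [aggMatrix_mul_diagonal_mul_scaledAgg_zero_apply, if_neg (T.parent_notMem k), sub_zero,
      Finset.sum_ite_mem, Finset.inter_self]
    exact Finset.sum_pos (fun c _ => hy c) (T.children_nonempty k)
  · intro k j hkj hne
    rw [aggMatrix_mul_diagonal_mul_scaledAgg_zero_apply, Finset.sum_eq_zero fun c hc =>
      if_neg fun hcj => hkj (T.child_unique k j c hc hcj), zero_sub] at hne
    split_ifs at hne with hp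
    · exact (T.height_child j _ hp).symm ▸ Nat.lt_succ_self _
    · exact absurd neg_zero hne

theorem diagonal_mul_scaledAgg_zero_transpose_mulVec_of_mem (yhat : Fin N → ℝ) (w : Fin K → ℝ)
    {k : Fin K} {s : Fin N} (hs : s ∈ T.children k) :
    ((diagonal yhat * (T.scaledAgg 0)ᵀ) *ᵥ w) s = -(yhat s * w k) := by
  rw [← mulVec_mulVec, mulVec_diagonal, mulVec, dotProduct,
    Finset.sum_eq_single k fun j _ hjk => ?_, transpose_apply, scaledAgg_zero_apply, if_pos hs]
  · ring
  · simp
  · rw [transpose_apply, scaledAgg_zero_apply,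
      if_neg fun hsj => hjk (T.child_unique j k s hsj hs), zero_mul]

theorem eq_div_mul_of_mulVec_eq_zero (yhat : Fin N → ℝ) {k : Fin K}
    (hσ : ∑ c ∈ T.children k, yhat c ≠ 0) {y : Fin N → ℝ} (hA : aggMatrix T *ᵥ y = 0) {t : ℝ}
    (ht : ∀ c ∈ T.children k, y c = yhat c * t) {s : Fin N} (hs : s ∈ T.children k) :
    y s = (yhat s / ∑ c ∈ T.children k, yhat c) * y (T.parent k) := by
  have hparent : y (T.parent k) = (∑ c ∈ T.children k, yhat c) * t := by
    have := congrFun hA k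
    rw [aggMatrix_mulVec_apply, Finset.sum_congr rfl ht, ← Finset.sum_mul] at this
    exact sub_eq_zero.1 this
  rw [hparent, ht s hs]
  field_simp

theorem tendsto_yTop (yhat : Fin N → ℝ) (hy : ∀ n, 0 < yhat n) :
    Tendsto (yTop T yhat) atTop
      (𝓝 (reconcile (aggMatrix T) (diagonal yhat * (T.scaledAgg 0)ᵀ) yhat)) := by
  have hP : Tendsto (fun M : ℝ => diagonal yhat * (T.scaledAgg M⁻¹)ᵀ) atTop
      (𝓝 (diagonal yhat * (T.scaledAgg 0)ᵀ)) := by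
    have : Continuous fun t => diagonal yhat * (T.scaledAgg t)ᵀ := by
      have := T.continuous_scaledAgg
      fun_prop
    exact this.continuousAt.tendsto.comp tendsto_inv_atTop_zero
  have hrec := continuousAt_reconcile _
    (T.isUnit_det_aggMatrix_mul_diagonal_mul_scaledAgg_zero yhat hy) yhat
  refine (hrec.tendsto.comp hP).congr' ?_
  filter_upwards [eventually_gt_atTop 0] with M hM
  exact (yTop_eq_reconcile T yhat (fun n => (hy n).ne') hM.ne').symm

end TreeHierarchy

theorem share_based_disaggregation_general (T : TreeHierarchy N K) (yhat : Fin N → ℝ)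
    (hy : ∀ n, 0 < yhat n) :
    ∃ ystar : Fin N → ℝ,
      (∀ n, Tendsto (fun M : ℝ => yTop T yhat M n) atTop (𝓝 (ystar n))) ∧
      ∀ k : Fin K, ∀ s ∈ T.children k,
        ystar s = (yhat s / ∑ c ∈ T.children k, yhat c) * ystar (T.parent k) := by
  set P := diagonal yhat * (T.scaledAgg 0)ᵀ
  have hP : IsUnit (aggMatrix T * P).det :=
    T.isUnit_det_aggMatrix_mul_diagonal_mul_scaledAgg_zero yhat hy
  refine ⟨reconcile (aggMatrix T) P yhat, tendsto_pi_nhds.1 (T.tendsto_yTop yhat hy),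
    fun k s hs => ?_⟩
  have hσ := (Finset.sum_pos (fun c _ => hy c) (T.children_nonempty k)).ne'
  refine T.eq_div_mul_of_mulVec_eq_zero yhat hσ (mulVec_reconcile _ hP yhat)
    (t := 1 + ((aggMatrix T * P)⁻¹ *ᵥ (aggMatrix T *ᵥ yhat)) k) (fun c hc => ?_) hs
  rw [reconcile, Pi.sub_apply, T.diagonal_mul_scaledAgg_zero_transpose_mulVec_of_mem yhat _ hc]
  ring

/-- With top-heavy weights, `y(M)` converges as `M → ∞` and the limit
is the share-based disaggregation with shares proportional to `ŷ`. -/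
theorem share_based_disaggregation (T : TreeHierarchy N K) (yhat : Fin N → ℝ)
    (hy : ∀ n, 0 < yhat n)
    (hinv : ∀ M : ℝ, 0 < M →
      IsUnit (aggMatrix T * (topW T yhat M)⁻¹ * (aggMatrix T)ᵀ).det) :
    ∃ ystar : Fin N → ℝ,
      (∀ n, Tendsto (fun M : ℝ => yTop T yhat M n) atTop (𝓝 (ystar n))) ∧
      ∀ k : Fin K, ∀ s ∈ T.children k,
        ystar s = (yhat s / ∑ c ∈ T.children k, yhat c) * ystar (T.parent k) :=
  share_based_disaggregation_general T yhat hy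
end

section
/- Let H be a strict tree-based hierarchy with canonical aggregation matrix A, positive initial predictions ŷ, and bottom-heavy weight matrices W(M). Then: (1) for every item n the limit y*_n := lim_{M→∞} y_n(M) exists and is finite; (2) for every constraint k, y*_{p_k} = Σ_{c∈C_k} y*_c; and (3) for every bottom-level item c (an item that is not the parent of any constraint), y*_c = ŷ_c. That is, the limit corresponds to bottom-up aggregation. -/
open Matrix Filter Topology

/-- A tree-based hierarchy in canonical form on items `Fin N` with `K` constraints.
Constraint `k` has parent item `parent k` and nonempty child set `children k`;
each item is a child in at most one constraint, and the depth function satisfies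
`D(c) = D(p_k) + 1` for every child `c` of `p_k`. -/
structure DepthHierarchy (N K : ℕ) where
  parent : Fin K → Fin N
  children : Fin K → Finset (Fin N)
  children_nonempty : ∀ k, (children k).Nonempty
  parent_notMem : ∀ k, parent k ∉ children k
  child_unique : ∀ k j : Fin K, ∀ n : Fin N, n ∈ children k → n ∈ children j → k = j
  depth : Fin N → ℕ
  depth_child : ∀ k : Fin K, ∀ c ∈ children k, depth c = depth (parent k) + 1

variable {N K : ℕ}

/-- The canonical aggregation matrix of a tree-based hierarchy:
`A k (p_k) = 1`, `A k c = -1` for `c ∈ C_k`, and `0` otherwise. -/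
noncomputable def aggMatrixD (T : DepthHierarchy N K) : Matrix (Fin K) (Fin N) ℝ :=
  fun k n => if n = T.parent k then 1 else if n ∈ T.children k then -1 else 0

/-- The bottom-heavy weight matrix: diagonal with entries `w_n(M) = M^(D n) / yhat n`. -/
noncomputable def bottomW (T : DepthHierarchy N K) (yhat : Fin N → ℝ) (M : ℝ) :
    Matrix (Fin N) (Fin N) ℝ :=
  Matrix.diagonal fun n => M ^ T.depth n / yhat n

/-- `λ(M) = (A W(M)⁻¹ Aᵀ)⁻¹ A ŷ`. -/
noncomputable def lamBot (T : DepthHierarchy N K) (yhat : Fin N → ℝ) (M : ℝ) : Fin K → ℝ :=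
  (aggMatrixD T * (bottomW T yhat M)⁻¹ * (aggMatrixD T)ᵀ)⁻¹.mulVec
    ((aggMatrixD T).mulVec yhat)

/-- `y(M) = ŷ - W(M)⁻¹ Aᵀ λ(M)`. -/
noncomputable def yBot (T : DepthHierarchy N K) (yhat : Fin N → ℝ) (M : ℝ) : Fin N → ℝ :=
  yhat - ((bottomW T yhat M)⁻¹ * (aggMatrixD T)ᵀ).mulVec (lamBot T yhat M)

/-- the rescaled Gram matrix, as a function of ε = 1/M. -/
noncomputable def Bmat (T : DepthHierarchy N K) (yhat : Fin N → ℝ) (ε : ℝ) :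
    Matrix (Fin K) (Fin K) ℝ :=
  fun k j =>
    if j = k then yhat (T.parent k) + ε * ∑ c ∈ T.children k, yhat c
    else if T.parent j ∈ T.children k then -yhat (T.parent j)
    else if T.parent k ∈ T.children j then -(ε * yhat (T.parent k))
    else 0

lemma agg_apply_eq (T : DepthHierarchy N K) (k : Fin K) (n : Fin N) :
    aggMatrixD T k n =
      (if n = T.parent k then (1:ℝ) else 0) + (if n ∈ T.children k then (-1:ℝ) else 0) := by
  unfold aggMatrixD
  split_ifs with h1 h2 h2
  · exact absurd (h1 ▸ h2) (T.parent_notMem k)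
  · simp
  · simp
  · simp

lemma bottomW_inv (T : DepthHierarchy N K) (yhat : Fin N → ℝ) (hy : ∀ n, 0 < yhat n)
    (M : ℝ) (hM : 0 < M) :
    (bottomW T yhat M)⁻¹ = Matrix.diagonal fun n => yhat n * (M ^ T.depth n)⁻¹ := by
  refine Matrix.inv_eq_right_inv ?_
  have hfun : (fun n => M ^ T.depth n / yhat n * (yhat n * (M ^ T.depth n)⁻¹)) =
      fun _ : Fin N => (1:ℝ) := by
    funext n
    have h1 : yhat n ≠ 0 := ne_of_gt (hy n)
    have h2 : (M : ℝ) ^ T.depth n ≠ 0 := pow_ne_zero _ (ne_of_gt hM)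
    field_simp
  rw [bottomW, Matrix.diagonal_mul_diagonal, hfun, Matrix.diagonal_one]

/-- The key factorization `G(M) = B(1/M) * D(M)`. -/
lemma G_factor (T : DepthHierarchy N K) (hstrict : Function.Injective T.parent)
    (yhat : Fin N → ℝ) (hy : ∀ n, 0 < yhat n) (M : ℝ) (hM : 0 < M) :
    aggMatrixD T * (bottomW T yhat M)⁻¹ * (aggMatrixD T)ᵀ =
      Bmat T yhat M⁻¹ *
        Matrix.diagonal (fun j : Fin K => (M ^ T.depth (T.parent j))⁻¹) := by
  have hMne : M ≠ 0 := ne_of_gt hM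
  rw [bottomW_inv T yhat hy M hM]
  ext k j
  rw [Matrix.mul_apply, Matrix.mul_diagonal]
  -- LHS sum
  set g : Fin N → ℝ := fun n => yhat n * (M ^ T.depth n)⁻¹ with hg
  have lhs_eq : ∑ n, (aggMatrixD T * Matrix.diagonal g) k n * (aggMatrixD T)ᵀ n j
      = ∑ n, aggMatrixD T k n * g n * aggMatrixD T j n := by
    refine Finset.sum_congr rfl fun n _ => ?_
    rw [Matrix.mul_diagonal, Matrix.transpose_apply]
  rw [lhs_eq]
  -- restrict the sum to insert (parent k) (children k)
  have hsub : ∑ n, aggMatrixD T k n * g n * aggMatrixD T j n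
      = ∑ n ∈ insert (T.parent k) (T.children k), aggMatrixD T k n * g n * aggMatrixD T j n := by
    refine (Finset.sum_subset (Finset.subset_univ _) fun n _ hn => ?_).symm
    have h1 : n ≠ T.parent k := fun h => hn (h ▸ Finset.mem_insert_self _ _)
    have h2 : n ∉ T.children k := fun h => hn (Finset.mem_insert_of_mem h)
    simp [aggMatrixD, h1, h2]
  rw [hsub, Finset.sum_insert (T.parent_notMem k)]
  have hApk : aggMatrixD T k (T.parent k) = 1 := by simp [aggMatrixD]
  have hAc : ∀ c ∈ T.children k, aggMatrixD T k c = -1 := by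
    intro c hc
    have : c ≠ T.parent k := fun h => T.parent_notMem k (h ▸ hc)
    simp [aggMatrixD, this, hc]
  rw [hApk]
  by_cases hjk : j = k
  · subst hjk
    have hsum : ∑ c ∈ T.children j, aggMatrixD T j c * g c * aggMatrixD T j c
        = ∑ c ∈ T.children j, g c := by
      refine Finset.sum_congr rfl fun c hc => ?_
      rw [hAc c hc]; ring
    rw [hsum, hApk]
    have hdep : ∑ c ∈ T.children j, g c
        = (∑ c ∈ T.children j, yhat c) * M⁻¹ * (M ^ T.depth (T.parent j))⁻¹ := by
      rw [Finset.sum_mul, Finset.sum_mul]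
      refine Finset.sum_congr rfl fun c hc => ?_
      rw [hg]
      simp only
      rw [T.depth_child j c hc, pow_succ, mul_inv]
      ring
    rw [hdep, Bmat]
    rw [if_pos rfl]
    simp only [hg]
    ring
  · -- j ≠ k
    have hpp : T.parent k ≠ T.parent j := fun h => hjk (hstrict h).symm
    have hApkj : aggMatrixD T j (T.parent k) = if T.parent k ∈ T.children j then (-1:ℝ) else 0 := by
      simp [aggMatrixD, hpp]
    have hsum : ∑ c ∈ T.children k, aggMatrixD T k c * g c * aggMatrixD T j c
        = ∑ c ∈ T.children k, (if c = T.parent j then -(g c) else 0) := by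
      refine Finset.sum_congr rfl fun c hc => ?_
      rw [hAc c hc]
      by_cases hcp : c = T.parent j
      · have hcj : c ∉ T.children j := hcp ▸ T.parent_notMem j
        simp [aggMatrixD, hcp, if_pos rfl]
      · have hcj : c ∉ T.children j := fun h => hjk (T.child_unique j k c h hc)
        have hcj' : c ∉ T.children j := hcj
        simp [aggMatrixD, hcp, hcj']
    rw [hsum, hApkj, Finset.sum_ite_eq' (T.children k) (T.parent j) (fun c => -(g c))]
    -- both-membership impossible by depth
    have hnotboth : ¬(T.parent j ∈ T.children k ∧ T.parent k ∈ T.children j) := by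
      rintro ⟨h1, h2⟩
      have e1 := T.depth_child k _ h1
      have e2 := T.depth_child j _ h2
      omega
    rw [Bmat, if_neg hjk]
    by_cases h1 : T.parent j ∈ T.children k
    · have h2 : T.parent k ∉ T.children j := fun h => hnotboth ⟨h1, h⟩
      rw [if_pos h1, if_pos h1, if_neg h2]
      have hd : T.depth (T.parent j) = T.depth (T.parent k) + 1 := T.depth_child k _ h1
      rw [hg]
      simp only
      ring
    · rw [if_neg h1, if_neg h1]
      by_cases h2 : T.parent k ∈ T.children j
      · rw [if_pos h2, if_pos h2]
        have hd : T.depth (T.parent k) = T.depth (T.parent j) + 1 := T.depth_child j _ h2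
        rw [hg]
        simp only
        rw [hd, pow_succ, mul_inv]
        ring
      · rw [if_neg h2, if_neg h2]
        ring

lemma B0_mulVec_inj (T : DepthHierarchy N K) (yhat : Fin N → ℝ) (hy : ∀ n, 0 < yhat n)
    (v : Fin K → ℝ) (hv : (Bmat T yhat 0).mulVec v = 0) : v = 0 := by
  set maxd := Finset.univ.sup (fun j : Fin K => T.depth (T.parent j)) with hmaxd
  have key : ∀ t : ℕ, ∀ k : Fin K, maxd < T.depth (T.parent k) + t → v k = 0 := by
    intro t
    induction t with
    | zero =>
      intro k hk
      have h2 := Finset.le_sup (f := fun j : Fin K => T.depth (T.parent j)) (Finset.mem_univ k)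
      omega
    | succ t ih =>
      intro k hk
      have hrow : ∑ j, Bmat T yhat 0 k j * v j = 0 := by
        simpa [Matrix.mulVec, dotProduct] using congrFun hv k
      rw [← Finset.add_sum_erase _ _ (Finset.mem_univ k)] at hrow
      have hterm : ∀ j ∈ Finset.univ.erase k, Bmat T yhat 0 k j * v j = 0 := by
        intro j hj
        have hjk : j ≠ k := Finset.ne_of_mem_erase hj
        by_cases hc : T.parent j ∈ T.children k
        · have hd : T.depth (T.parent j) = T.depth (T.parent k) + 1 := T.depth_child k _ hc
          have : v j = 0 := ih j (by omega)
          rw [this, mul_zero]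
        · simp [Bmat, hjk, hc]
      rw [Finset.sum_eq_zero hterm, add_zero] at hrow
      have hB : Bmat T yhat 0 k k = yhat (T.parent k) := by simp [Bmat]
      rw [hB] at hrow
      exact (mul_eq_zero.mp hrow).resolve_left (ne_of_gt (hy _))
  funext k
  exact key (maxd + 1) k (by omega)

lemma B0_det_ne (T : DepthHierarchy N K) (yhat : Fin N → ℝ) (hy : ∀ n, 0 < yhat n) :
    (Bmat T yhat 0).det ≠ 0 := by
  intro h
  obtain ⟨v, hv0, hv⟩ := Matrix.exists_mulVec_eq_zero_iff.mpr h
  exact hv0 (B0_mulVec_inj T yhat hy v hv)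

noncomputable def muB (T : DepthHierarchy N K) (yhat : Fin N → ℝ) (ε : ℝ) : Fin K → ℝ :=
  (Bmat T yhat ε)⁻¹.mulVec ((aggMatrixD T).mulVec yhat)

lemma diag_pow_inv (T : DepthHierarchy N K) (M : ℝ) (hM : 0 < M) :
    (Matrix.diagonal fun j : Fin K => (M ^ T.depth (T.parent j))⁻¹)⁻¹ =
      Matrix.diagonal fun j : Fin K => M ^ T.depth (T.parent j) := by
  refine Matrix.inv_eq_right_inv ?_
  rw [Matrix.diagonal_mul_diagonal]
  have hfun : (fun j : Fin K => (M ^ T.depth (T.parent j))⁻¹ * M ^ T.depth (T.parent j)) =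
      fun _ : Fin K => (1:ℝ) := by
    funext j
    exact inv_mul_cancel₀ (pow_ne_zero _ (ne_of_gt hM))
  rw [hfun, Matrix.diagonal_one]

lemma lam_eq (T : DepthHierarchy N K) (hstrict : Function.Injective T.parent)
    (yhat : Fin N → ℝ) (hy : ∀ n, 0 < yhat n) (M : ℝ) (hM : 0 < M) :
    lamBot T yhat M = fun k => M ^ T.depth (T.parent k) * muB T yhat M⁻¹ k := by
  rw [lamBot, G_factor T hstrict yhat hy M hM, Matrix.mul_inv_rev, diag_pow_inv T M hM]
  rw [← Matrix.mulVec_mulVec]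
  funext k
  rw [Matrix.mulVec_diagonal]
  rfl

lemma yBot_eq (T : DepthHierarchy N K) (hstrict : Function.Injective T.parent)
    (yhat : Fin N → ℝ) (hy : ∀ n, 0 < yhat n) (M : ℝ) (hM : 0 < M) (n : Fin N) :
    yBot T yhat M n =
      yhat n - yhat n * (∑ k ∈ Finset.univ.filter (fun k => T.parent k = n), muB T yhat M⁻¹ k)
        + yhat n * M⁻¹ *
          (∑ k ∈ Finset.univ.filter (fun k => n ∈ T.children k), muB T yhat M⁻¹ k) := by
  have hMne : M ≠ 0 := ne_of_gt hM
  rw [yBot, Pi.sub_apply, bottomW_inv T yhat hy M hM, lam_eq T hstrict yhat hy M hM]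
  have hmv : (Matrix.diagonal (fun n => yhat n * (M ^ T.depth n)⁻¹) * (aggMatrixD T)ᵀ).mulVec
      (fun k => M ^ T.depth (T.parent k) * muB T yhat M⁻¹ k) n
      = ∑ k, yhat n * (M ^ T.depth n)⁻¹ * aggMatrixD T k n *
          (M ^ T.depth (T.parent k) * muB T yhat M⁻¹ k) := by
    rw [Matrix.mulVec, dotProduct]
    refine Finset.sum_congr rfl fun k _ => ?_
    rw [Matrix.diagonal_mul, Matrix.transpose_apply]
  rw [hmv]
  have hsplit : ∀ k : Fin K,
      yhat n * (M ^ T.depth n)⁻¹ * aggMatrixD T k n *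
          (M ^ T.depth (T.parent k) * muB T yhat M⁻¹ k)
        = (if T.parent k = n then yhat n * muB T yhat M⁻¹ k else 0)
          + (if n ∈ T.children k then -(yhat n * M⁻¹ * muB T yhat M⁻¹ k) else 0) := by
    intro k
    rw [agg_apply_eq]
    by_cases h1 : n = T.parent k
    · have h2 : n ∉ T.children k := by rw [h1]; exact T.parent_notMem k
      have h : M ^ T.depth n * (M ^ T.depth n)⁻¹ = 1 := mul_inv_cancel₀ (pow_ne_zero _ hMne)
      rw [if_pos h1, if_neg h2, if_pos h1.symm, if_neg h2, ← h1]
      linear_combination (yhat n * muB T yhat M⁻¹ k) * h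
    · rw [if_neg h1, if_neg (show ¬ T.parent k = n from fun h => h1 h.symm)]
      by_cases h2 : n ∈ T.children k
      · rw [if_pos h2, if_pos h2]
        rw [T.depth_child k n h2, pow_succ, mul_inv]
        have h : (M ^ T.depth (T.parent k))⁻¹ * M ^ T.depth (T.parent k) = 1 :=
          inv_mul_cancel₀ (pow_ne_zero _ hMne)
        linear_combination (-(yhat n * M⁻¹ * muB T yhat M⁻¹ k)) * h
      · rw [if_neg h2, if_neg h2]
        ring
  rw [Finset.sum_congr rfl fun k _ => hsplit k, Finset.sum_add_distrib]
  rw [← Finset.sum_filter, ← Finset.sum_filter]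
  rw [Finset.sum_neg_distrib]
  rw [← Finset.mul_sum, ← Finset.mul_sum]
  ring

lemma Bmat_continuous (T : DepthHierarchy N K) (yhat : Fin N → ℝ) :
    Continuous fun ε => Bmat T yhat ε := by
  refine continuous_matrix fun k j => ?_
  unfold Bmat
  split_ifs <;> fun_prop

lemma mu_tendsto (T : DepthHierarchy N K) (yhat : Fin N → ℝ) (hy : ∀ n, 0 < yhat n)
    (k : Fin K) :
    Tendsto (fun ε => muB T yhat ε k) (𝓝 0) (𝓝 (muB T yhat 0 k)) := by
  have hform : ∀ ε : ℝ, muB T yhat ε k =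
      ((Bmat T yhat ε).det)⁻¹ *
        ((Bmat T yhat ε).adjugate.mulVec ((aggMatrixD T).mulVec yhat) k) := by
    intro ε
    rw [muB, Matrix.inv_def, Ring.inverse_eq_inv', Matrix.smul_mulVec, Pi.smul_apply,
      smul_eq_mul]
  simp only [hform]
  have hB := Bmat_continuous T yhat
  have hdet : Tendsto (fun ε => ((Bmat T yhat ε).det)⁻¹) (𝓝 0)
      (𝓝 (((Bmat T yhat 0).det)⁻¹)) :=
    (hB.matrix_det.tendsto 0).inv₀ (B0_det_ne T yhat hy)
  have hadj : Tendsto (fun ε => (Bmat T yhat ε).adjugate.mulVec ((aggMatrixD T).mulVec yhat) k)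
      (𝓝 0) (𝓝 ((Bmat T yhat 0).adjugate.mulVec ((aggMatrixD T).mulVec yhat) k)) := by
    have : Continuous fun ε => (Bmat T yhat ε).adjugate.mulVec ((aggMatrixD T).mulVec yhat) k := by
      simp only [Matrix.mulVec, dotProduct]
      exact continuous_finset_sum _ fun j _ =>
        (((continuous_apply j).comp ((continuous_apply k).comp hB.matrix_adjugate)).mul
          continuous_const)
    exact this.tendsto 0
  exact hdet.mul hadj

lemma b_apply (T : DepthHierarchy N K) (yhat : Fin N → ℝ) (k : Fin K) :
    (aggMatrixD T).mulVec yhat k = yhat (T.parent k) - ∑ c ∈ T.children k, yhat c := by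
  rw [Matrix.mulVec, dotProduct]
  have hsub : ∑ n, aggMatrixD T k n * yhat n
      = ∑ n ∈ insert (T.parent k) (T.children k), aggMatrixD T k n * yhat n := by
    refine (Finset.sum_subset (Finset.subset_univ _) fun n _ hn => ?_).symm
    have h1 : n ≠ T.parent k := fun h => hn (h ▸ Finset.mem_insert_self _ _)
    have h2 : n ∉ T.children k := fun h => hn (Finset.mem_insert_of_mem h)
    simp [aggMatrixD, h1, h2]
  rw [hsub, Finset.sum_insert (T.parent_notMem k)]
  have hApk : aggMatrixD T k (T.parent k) = 1 := by simp [aggMatrixD]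
  have hsum : ∑ c ∈ T.children k, aggMatrixD T k c * yhat c
      = ∑ c ∈ T.children k, -(yhat c) := by
    refine Finset.sum_congr rfl fun c hc => ?_
    have hc' : c ≠ T.parent k := fun h => T.parent_notMem k (h ▸ hc)
    simp [aggMatrixD, hc', hc]
  rw [hApk, hsum, Finset.sum_neg_distrib]
  ring

lemma mu0_row (T : DepthHierarchy N K) (yhat : Fin N → ℝ) (hy : ∀ n, 0 < yhat n) (k : Fin K) :
    yhat (T.parent k) * muB T yhat 0 k
      - ∑ j ∈ Finset.univ.filter (fun j => T.parent j ∈ T.children k),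
          yhat (T.parent j) * muB T yhat 0 j
      = yhat (T.parent k) - ∑ c ∈ T.children k, yhat c := by
  have hdet : IsUnit (Bmat T yhat 0).det := isUnit_iff_ne_zero.mpr (B0_det_ne T yhat hy)
  have hmv : (Bmat T yhat 0).mulVec (muB T yhat 0) = (aggMatrixD T).mulVec yhat := by
    rw [muB, Matrix.mulVec_mulVec, Matrix.mul_nonsing_inv _ hdet, Matrix.one_mulVec]
  have hrow : ∑ j, Bmat T yhat 0 k j * muB T yhat 0 j
      = yhat (T.parent k) - ∑ c ∈ T.children k, yhat c := by
    rw [← b_apply T yhat k, ← hmv]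
    rfl
  rw [← Finset.add_sum_erase _ _ (Finset.mem_univ k)] at hrow
  have hBkk : Bmat T yhat 0 k k = yhat (T.parent k) := by simp [Bmat]
  have hterm : ∀ j ∈ Finset.univ.erase k, Bmat T yhat 0 k j * muB T yhat 0 j
      = if T.parent j ∈ T.children k then -(yhat (T.parent j) * muB T yhat 0 j) else 0 := by
    intro j hj
    have hjk : j ≠ k := Finset.ne_of_mem_erase hj
    by_cases hc : T.parent j ∈ T.children k
    · simp [Bmat, hjk, hc]
    · simp [Bmat, hjk, hc]
  rw [Finset.sum_congr rfl hterm, ← Finset.sum_filter] at hrow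
  have hfil : (Finset.univ.erase k).filter (fun j => T.parent j ∈ T.children k)
      = Finset.univ.filter (fun j => T.parent j ∈ T.children k) := by
    ext j
    constructor
    · intro h
      exact Finset.mem_filter.mpr ⟨Finset.mem_univ j, (Finset.mem_filter.mp h).2⟩
    · intro h
      have h2 := (Finset.mem_filter.mp h).2
      refine Finset.mem_filter.mpr ⟨Finset.mem_erase.mpr ⟨fun hjk => ?_, Finset.mem_univ j⟩, h2⟩
      exact T.parent_notMem k (hjk ▸ h2)
  rw [hfil, Finset.sum_neg_distrib, hBkk] at hrow
  linarith [hrow]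

/-- For a strict tree-based hierarchy with bottom-heavy weights, `y(M)`
converges as `M → ∞`, the limit satisfies the aggregation constraints, and bottom-level
items (items that are not the parent of any constraint) keep their initial predictions:
the limit corresponds to bottom-up aggregation. -/
theorem bottom_up_aggregation (T : DepthHierarchy N K)
    (hstrict : Function.Injective T.parent) (yhat : Fin N → ℝ)
    (hy : ∀ n, 0 < yhat n)
    (hinv : ∀ M : ℝ, 0 < M →
      IsUnit (aggMatrixD T * (bottomW T yhat M)⁻¹ * (aggMatrixD T)ᵀ).det) :
    ∃ ystar : Fin N → ℝ,
      (∀ n, Tendsto (fun M : ℝ => yBot T yhat M n) atTop (𝓝 (ystar n))) ∧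
      (∀ k : Fin K, ystar (T.parent k) = ∑ c ∈ T.children k, ystar c) ∧
      (∀ c : Fin N, (∀ k : Fin K, T.parent k ≠ c) → ystar c = yhat c) := by
  set μ : Fin K → ℝ := muB T yhat 0 with hμdef
  refine ⟨fun n => yhat n - yhat n * ∑ k ∈ Finset.univ.filter (fun k => T.parent k = n), μ k,
    ?_, ?_, ?_⟩
  · -- convergence
    intro n
    have hμt : ∀ k : Fin K, Tendsto (fun M : ℝ => muB T yhat M⁻¹ k) atTop (𝓝 (μ k)) :=
      fun k => (mu_tendsto T yhat hy k).comp tendsto_inv_atTop_zero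
    have hS1 : Tendsto (fun M : ℝ =>
        ∑ k ∈ Finset.univ.filter (fun k => T.parent k = n), muB T yhat M⁻¹ k) atTop
        (𝓝 (∑ k ∈ Finset.univ.filter (fun k => T.parent k = n), μ k)) :=
      tendsto_finset_sum _ fun k _ => hμt k
    have hS2 : Tendsto (fun M : ℝ =>
        ∑ k ∈ Finset.univ.filter (fun k => n ∈ T.children k), muB T yhat M⁻¹ k) atTop
        (𝓝 (∑ k ∈ Finset.univ.filter (fun k => n ∈ T.children k), μ k)) :=
      tendsto_finset_sum _ fun k _ => hμt k
    have hf : Tendsto (fun M : ℝ =>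
        yhat n - yhat n * (∑ k ∈ Finset.univ.filter (fun k => T.parent k = n), muB T yhat M⁻¹ k)
          + yhat n * M⁻¹ *
            (∑ k ∈ Finset.univ.filter (fun k => n ∈ T.children k), muB T yhat M⁻¹ k)) atTop
        (𝓝 (yhat n - yhat n * (∑ k ∈ Finset.univ.filter (fun k => T.parent k = n), μ k)
          + yhat n * 0 * (∑ k ∈ Finset.univ.filter (fun k => n ∈ T.children k), μ k))) :=
      (tendsto_const_nhds.sub (tendsto_const_nhds.mul hS1)).add
        ((tendsto_const_nhds.mul tendsto_inv_atTop_zero).mul hS2)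
    have heq : (yhat n - yhat n * (∑ k ∈ Finset.univ.filter (fun k => T.parent k = n), μ k)
          + yhat n * 0 * (∑ k ∈ Finset.univ.filter (fun k => n ∈ T.children k), μ k))
        = yhat n - yhat n * ∑ k ∈ Finset.univ.filter (fun k => T.parent k = n), μ k := by ring
    rw [heq] at hf
    refine Tendsto.congr' ?_ hf
    filter_upwards [eventually_gt_atTop (0:ℝ)] with M hM
    exact (yBot_eq T hstrict yhat hy M hM n).symm
  · -- aggregation constraints
    intro k
    have hfil1 : Finset.univ.filter (fun j => T.parent j = T.parent k) = {k} := by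
      ext j
      simp only [Finset.mem_filter, Finset.mem_univ, true_and, Finset.mem_singleton]
      exact ⟨fun h => hstrict h, fun h => h ▸ rfl⟩
    have hswap : ∑ c ∈ T.children k,
          yhat c * ∑ j ∈ Finset.univ.filter (fun j => T.parent j = c), μ j
        = ∑ j ∈ Finset.univ.filter (fun j => T.parent j ∈ T.children k),
            yhat (T.parent j) * μ j := by
      rw [← Finset.sum_fiberwise_eq_sum_filter Finset.univ (T.children k) T.parent
        (fun j => yhat (T.parent j) * μ j)]
      refine Finset.sum_congr rfl fun c hc => ?_
      rw [Finset.mul_sum]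
      refine Finset.sum_congr rfl fun j hj => ?_
      rw [(Finset.mem_filter.mp hj).2]
    have hrow := mu0_row T yhat hy k
    beta_reduce
    rw [hfil1, Finset.sum_singleton]
    rw [Finset.sum_sub_distrib, hswap]
    linarith [hrow]
  · -- bottom-level items
    intro c hc
    have hfil : Finset.univ.filter (fun k => T.parent k = c) = ∅ :=
      Finset.filter_false_of_mem fun k _ => hc k
    beta_reduce
    rw [hfil, Finset.sum_empty, mul_zero, sub_zero]
end

section
/- Let H be a tree-based hierarchy with canonical aggregation matrix A, positive initial predictions ŷ, and top-heavy weight matrices W(M). Then for every constraint index k (1 ≤ k ≤ K), the ratio λ_k(M)/M^{H(p_k)} tends to 0 as M → ∞. -/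
open Matrix Filter Topology

variable {N K : ℕ}

/-!
Multiplying `A W(M)⁻¹ Aᵀ` on the right by `D(M) = diag (M ^ H(p_k))` makes it affine in `M`:
every child sits one level below its parent, so with the parent and child incidence matrices
`P` and `C` (so that `A = P - C`) one gets `A W(M)⁻¹ Aᵀ D(M) = A diag(ŷ) Pᵀ - M • A diag(ŷ) Cᵀ`.
Hence `λ_k(M) / M ^ H(p_k)` is the `k`-th entry of `(B₀ + M • B₁)⁻¹ (A ŷ)`, which is
`M⁻¹ • (M⁻¹ • B₀ + B₁)⁻¹ (A ŷ) → 0` once `B₁ = -A diag(ŷ) Cᵀ` is invertible. It is: an entry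
`(B₁)_{kj}` with `k ≠ j` can only be nonzero when `p_k` is a child of `p_j`, so `B₁` is triangular
for the height of the parent, and its diagonal entries are `∑_{c ∈ C_k} ŷ_c > 0`.
-/

namespace Matrix

variable {ι R : Type*} [Fintype ι] [DecidableEq ι]

theorem det_pos_of_apply_eq_zero_of_le [CommRing R] [LinearOrder R] [IsStrictOrderedRing R]
    {α : Type*} [LinearOrder α] {B : Matrix ι ι R} (b : ι → α)
    (hoff : ∀ i j, i ≠ j → b j ≤ b i → B i j = 0) (hdiag : ∀ i, 0 < B i i) : 0 < B.det := by
  have hB : B.BlockTriangular b := fun i j hlt => hoff i j (by rintro rfl; exact hlt.false) hlt.le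
  rw [hB.det]
  refine Finset.prod_pos fun a _ => ?_
  have hblock : B.toSquareBlock b a = diagonal fun i : {i // b i = a} => B i i := by
    ext ⟨i, hi⟩ ⟨j, hj⟩
    by_cases hij : i = j
    · subst hij
      simp [toSquareBlock, toSquareBlockProp, toBlock]
    · simp [toSquareBlock, toSquareBlockProp, toBlock, hij, hoff i j hij (hj.trans hi.symm).le]
  rw [hblock, det_diagonal]
  exact Finset.prod_pos fun i _ => hdiag i

variable [Field R]

theorem inv_diagonal_of_ne_zero {d : ι → R} (hd : ∀ i, d i ≠ 0) :
    (diagonal d)⁻¹ = diagonal fun i => (d i)⁻¹ := by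
  refine inv_eq_left_inv ?_
  rw [diagonal_mul_diagonal, ← diagonal_one]
  exact congrArg diagonal (funext fun i => inv_mul_cancel₀ (hd i))

theorem mul_diagonal_inv_mulVec {d : ι → R} (hd : ∀ i, d i ≠ 0) (S : Matrix ι ι R) (v : ι → R) :
    (S * diagonal d)⁻¹ *ᵥ v = fun i => (S⁻¹ *ᵥ v) i / d i := by
  ext i
  rw [mul_inv_rev, inv_diagonal_of_ne_zero hd, ← mulVec_mulVec, mulVec_diagonal, div_eq_inv_mul]

theorem tendsto_inv_add_smul_atTop_zero (B₀ B₁ : Matrix ι ι ℝ) (h : B₁.det ≠ 0) :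
    Tendsto (fun M : ℝ => (B₀ + M • B₁)⁻¹) atTop (𝓝 0) := by
  have hcont : Continuous fun ε : ℝ => ε • B₀ + B₁ := by fun_prop
  have hinv : ContinuousAt (fun ε : ℝ => (ε • B₀ + B₁)⁻¹) 0 := by
    refine (continuousAt_matrix_inv _ ?_).comp hcont.continuousAt
    rw [zero_smul, zero_add, Ring.inverse_eq_inv']
    exact continuousAt_inv₀ h
  have hdet : ∀ᶠ M : ℝ in atTop, (M⁻¹ • B₀ + B₁).det ≠ 0 := by
    refine tendsto_inv_atTop_zero.eventually ((hcont.matrix_det.continuousAt).eventually_ne ?_)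
    simpa using h
  have hlim : Tendsto (fun M : ℝ => M⁻¹ • (M⁻¹ • B₀ + B₁)⁻¹) atTop (𝓝 0) := by
    simpa using tendsto_inv_atTop_zero.smul (hinv.tendsto.comp tendsto_inv_atTop_zero)
  refine hlim.congr' ?_
  filter_upwards [eventually_gt_atTop 0, hdet] with M hM hM'
  have hfactor : B₀ + M • B₁ = M • (M⁻¹ • B₀ + B₁) := by
    rw [smul_add, smul_smul, mul_inv_cancel₀ hM.ne', one_smul]
  have : Invertible M := invertibleOfNonzero hM.ne'
  rw [hfactor, inv_smul _ M (isUnit_iff_ne_zero.mpr hM'), invOf_eq_inv]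

end Matrix

noncomputable def parentMatrix (T : TreeHierarchy N K) : Matrix (Fin K) (Fin N) ℝ :=
  of fun k n => if n = T.parent k then 1 else 0

noncomputable def childMatrix (T : TreeHierarchy N K) : Matrix (Fin K) (Fin N) ℝ :=
  of fun k n => if n ∈ T.children k then 1 else 0

section aggMatrix

variable (T : TreeHierarchy N K)

theorem aggMatrix_apply_parent (k : Fin K) : aggMatrix T k (T.parent k) = 1 :=
  if_pos rfl

theorem aggMatrix_apply_of_mem_children {k : Fin K} {n : Fin N} (hn : n ∈ T.children k) :
    aggMatrix T k n = -1 := by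
  have hne : n ≠ T.parent k := by rintro rfl; exact T.parent_notMem k hn
  simp [aggMatrix, hne, hn]

theorem aggMatrix_apply_of_mem_children_of_height_le {k j : Fin K} {n : Fin N}
    (hn : n ∈ T.children j) (hkj : k ≠ j)
    (hle : T.height (T.parent j) ≤ T.height (T.parent k)) : aggMatrix T k n = 0 := by
  have hparent : n ≠ T.parent k := by
    rintro rfl
    have := T.height_child j _ hn
    omega
  have hchild : n ∉ T.children k := fun hn' => hkj (T.child_unique k j n hn' hn)
  simp [aggMatrix, hparent, hchild]

theorem aggMatrix_mul_diagonal_mul_childMatrix_transpose_apply (yhat : Fin N → ℝ) (k j : Fin K) :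
    (aggMatrix T * diagonal yhat * (childMatrix T)ᵀ) k j =
      ∑ n ∈ T.children j, aggMatrix T k n * yhat n := by
  simp [mul_apply, childMatrix, diagonal_apply]

theorem det_neg_aggMatrix_mul_diagonal_mul_childMatrix_transpose_pos {yhat : Fin N → ℝ}
    (hy : ∀ n, 0 < yhat n) :
    0 < (-(aggMatrix T * diagonal yhat * (childMatrix T)ᵀ)).det := by
  refine det_pos_of_apply_eq_zero_of_le (fun k => T.height (T.parent k)) (fun k j hkj hle => ?_)
    fun k => ?_
  · rw [Matrix.neg_apply, aggMatrix_mul_diagonal_mul_childMatrix_transpose_apply, neg_eq_zero]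
    exact Finset.sum_eq_zero fun n hn => by
      rw [aggMatrix_apply_of_mem_children_of_height_le T hn hkj hle, zero_mul]
  · rw [Matrix.neg_apply, aggMatrix_mul_diagonal_mul_childMatrix_transpose_apply,
      ← Finset.sum_neg_distrib]
    refine Finset.sum_pos (fun n hn => ?_) (T.children_nonempty k)
    rw [aggMatrix_apply_of_mem_children T hn, neg_one_mul, neg_neg]
    exact hy n

end aggMatrix

section topW

variable (T : TreeHierarchy N K) {yhat : Fin N → ℝ} {M : ℝ}

theorem inv_topW (hy : ∀ n, yhat n ≠ 0) (hM : M ≠ 0) :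
    (topW T yhat M)⁻¹ = diagonal fun n => yhat n / M ^ T.height n := by
  rw [topW, inv_diagonal_of_ne_zero fun n => div_ne_zero (pow_ne_zero _ hM) (hy n)]
  simp only [inv_div]

theorem inv_topW_mul_aggMatrix_transpose_mul_diagonal (hy : ∀ n, yhat n ≠ 0) (hM : M ≠ 0) :
    (topW T yhat M)⁻¹ * (aggMatrix T)ᵀ * diagonal (fun k => M ^ T.height (T.parent k)) =
      diagonal yhat * ((parentMatrix T)ᵀ - M • (childMatrix T)ᵀ) := by
  ext n k
  rw [inv_topW T hy hM, mul_diagonal, diagonal_mul, diagonal_mul, transpose_apply]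
  simp only [Matrix.sub_apply, Matrix.smul_apply, transpose_apply, parentMatrix, childMatrix,
    of_apply, smul_eq_mul]
  by_cases hparent : n = T.parent k
  · subst hparent
    rw [aggMatrix_apply_parent, if_pos rfl, if_neg (T.parent_notMem k)]
    field_simp
    ring
  by_cases hchild : n ∈ T.children k
  · rw [aggMatrix_apply_of_mem_children T hchild, if_neg hparent, if_pos hchild,
      T.height_child k n hchild, pow_succ]
    field_simp
    ring
  · simp [aggMatrix, hparent, hchild]

theorem aggMatrix_mul_inv_topW_mul_aggMatrix_transpose_mul_diagonal
    (hy : ∀ n, yhat n ≠ 0) (hM : M ≠ 0) :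
    aggMatrix T * (topW T yhat M)⁻¹ * (aggMatrix T)ᵀ *
        diagonal (fun k => M ^ T.height (T.parent k)) =
      aggMatrix T * diagonal yhat * (parentMatrix T)ᵀ +
        M • -(aggMatrix T * diagonal yhat * (childMatrix T)ᵀ) := by
  have hscaled := inv_topW_mul_aggMatrix_transpose_mul_diagonal T hy hM
  simp only [Matrix.mul_assoc] at hscaled ⊢
  rw [hscaled, Matrix.mul_sub, Matrix.mul_sub, Matrix.mul_smul, Matrix.mul_smul, smul_neg,
    sub_eq_add_neg]

theorem lamTop_div_pow_eq (hy : ∀ n, yhat n ≠ 0) (hM : M ≠ 0) (k : Fin K) :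
    lamTop T yhat M k / M ^ T.height (T.parent k) =
      ((aggMatrix T * diagonal yhat * (parentMatrix T)ᵀ +
        M • -(aggMatrix T * diagonal yhat * (childMatrix T)ᵀ))⁻¹ *ᵥ (aggMatrix T *ᵥ yhat)) k := by
  rw [← aggMatrix_mul_inv_topW_mul_aggMatrix_transpose_mul_diagonal T hy hM,
    mul_diagonal_inv_mulVec fun k => pow_ne_zero _ hM, lamTop]

end topW

theorem height_lambdas_converge_zero_general (T : TreeHierarchy N K) (yhat : Fin N → ℝ)
    (hy : ∀ n, 0 < yhat n)
    (k : Fin K) :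
    Tendsto (fun M : ℝ => lamTop T yhat M k / M ^ T.height (T.parent k)) atTop (𝓝 0) := by
  have hy₀ : ∀ n, yhat n ≠ 0 := fun n => (hy n).ne'
  have hinv := tendsto_inv_add_smul_atTop_zero (aggMatrix T * diagonal yhat * (parentMatrix T)ᵀ)
    _ (det_neg_aggMatrix_mul_diagonal_mul_childMatrix_transpose_pos T hy).ne'
  have hcoord : Continuous fun X : Matrix (Fin K) (Fin K) ℝ => (X *ᵥ (aggMatrix T *ᵥ yhat)) k := by
    fun_prop
  have hlim := (hcoord.tendsto 0).comp hinv
  rw [zero_mulVec, Pi.zero_apply] at hlim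
  refine hlim.congr' ?_
  filter_upwards [eventually_ne_atTop 0] with M hM
  exact (lamTop_div_pow_eq T hy₀ hM k).symm

/-- With top-heavy weights, `λ_k(M) / M^(H(p_k)) → 0` as `M → ∞`. -/
theorem height_lambdas_converge_zero (T : TreeHierarchy N K) (yhat : Fin N → ℝ)
    (hy : ∀ n, 0 < yhat n)
    (hinv : ∀ M : ℝ, 0 < M →
      IsUnit (aggMatrix T * (topW T yhat M)⁻¹ * (aggMatrix T)ᵀ).det)
    (k : Fin K) :
    Tendsto (fun M : ℝ => lamTop T yhat M k / M ^ T.height (T.parent k)) atTop (𝓝 0) :=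
  height_lambdas_converge_zero_general T yhat hy k
end

section
/- Let H be a tree-based hierarchy with canonical aggregation matrix A, positive initial predictions ŷ, and top-heavy weight matrices W(M). Then for every constraint index k (1 ≤ k ≤ K), the limit lim_{M→∞} λ_k(M)/M^{H(p_k)−1} exists and is finite. -/
open Matrix Filter Topology

variable {N K : ℕ}

/-! ### Auxiliary development for the convergence theorem -/

/-- The rescaled Gram matrix, as a polynomial (affine) function of `t = 1/M`:
`F(t) k j = A k (p_j) ŷ(p_j) t - ∑_{c ∈ C_j} A k c ŷ c`.  For `M > 0` one has
`F(1/M) = (A W(M)⁻¹ Aᵀ) · diag(M^(H(p_j)-1))`. -/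
noncomputable def Fmat (T : TreeHierarchy N K) (yhat : Fin N → ℝ) (t : ℝ) :
    Matrix (Fin K) (Fin K) ℝ := fun k j =>
  aggMatrix T k (T.parent j) * yhat (T.parent j) * t
    - ∑ c ∈ T.children j, aggMatrix T k c * yhat c

lemma height_parent_pos (T : TreeHierarchy N K) (j : Fin K) :
    1 ≤ T.height (T.parent j) := by
  obtain ⟨c, hc⟩ := T.children_nonempty j
  rw [T.height_child j c hc]
  omega

lemma topW_inv (T : TreeHierarchy N K) (yhat : Fin N → ℝ) (hy : ∀ n, 0 < yhat n)
    {M : ℝ} (hM : 0 < M) :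
    (topW T yhat M)⁻¹ = Matrix.diagonal (fun n => yhat n / M ^ T.height n) := by
  apply Matrix.inv_eq_right_inv
  rw [topW, Matrix.diagonal_mul_diagonal]
  have h : (fun n => M ^ T.height n / yhat n * (yhat n / M ^ T.height n)) = fun _ : Fin N => (1:ℝ) := by
    funext n
    have h1 : (M : ℝ) ^ T.height n ≠ 0 := pow_ne_zero _ hM.ne'
    have h2 : yhat n ≠ 0 := (hy n).ne'
    field_simp
  rw [h, Matrix.diagonal_one]

lemma Fmat_eq (T : TreeHierarchy N K) (yhat : Fin N → ℝ) (hy : ∀ n, 0 < yhat n)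
    {M : ℝ} (hM : 0 < M) :
    Fmat T yhat M⁻¹ =
      (aggMatrix T * (topW T yhat M)⁻¹ * (aggMatrix T)ᵀ) *
        Matrix.diagonal (fun j => M ^ (T.height (T.parent j) - 1)) := by
  ext k j
  rw [Matrix.mul_diagonal, topW_inv T yhat hy hM, Matrix.mul_apply]
  simp_rw [Matrix.mul_diagonal, Matrix.transpose_apply, Finset.sum_mul]
  have hz : ∀ x ∈ (Finset.univ : Finset (Fin N)),
      x ∉ insert (T.parent j) (T.children j) →
      aggMatrix T k x * (yhat x / M ^ T.height x) * aggMatrix T j x *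
        M ^ (T.height (T.parent j) - 1) = 0 := by
    intro x _ hx
    rw [Finset.mem_insert] at hx
    push_neg at hx
    have : aggMatrix T j x = 0 := by simp [aggMatrix, hx.1, hx.2]
    rw [this, mul_zero, zero_mul]
  rw [← Finset.sum_subset (Finset.subset_univ (insert (T.parent j) (T.children j))) hz,
    Finset.sum_insert (T.parent_notMem j)]
  have hpar : aggMatrix T k (T.parent j) * (yhat (T.parent j) / M ^ T.height (T.parent j)) *
      aggMatrix T j (T.parent j) * M ^ (T.height (T.parent j) - 1)
      = aggMatrix T k (T.parent j) * yhat (T.parent j) * M⁻¹ := by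
    have h1 : aggMatrix T j (T.parent j) = 1 := by simp [aggMatrix]
    have hge := height_parent_pos T j
    have hpow : M ^ T.height (T.parent j) = M ^ (T.height (T.parent j) - 1) * M := by
      rw [← pow_succ]
      congr 1
      omega
    have h2 : (M : ℝ) ^ (T.height (T.parent j) - 1) ≠ 0 := pow_ne_zero _ hM.ne'
    rw [h1, mul_one, hpow]
    field_simp
  have hchild : ∀ c ∈ T.children j,
      aggMatrix T k c * (yhat c / M ^ T.height c) * aggMatrix T j c *
        M ^ (T.height (T.parent j) - 1) = -(aggMatrix T k c * yhat c) := by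
    intro c hc
    have hne : c ≠ T.parent j := fun h => T.parent_notMem j (h ▸ hc)
    have h1 : aggMatrix T j c = -1 := by simp [aggMatrix, hne, hc]
    have h2 : T.height (T.parent j) - 1 = T.height c := by
      rw [T.height_child j c hc]
      omega
    have h3 : (M : ℝ) ^ T.height c ≠ 0 := pow_ne_zero _ hM.ne'
    rw [h1, h2]
    field_simp
  rw [hpar, Finset.sum_congr rfl hchild, Finset.sum_neg_distrib]
  show aggMatrix T k (T.parent j) * yhat (T.parent j) * M⁻¹ -
      ∑ c ∈ T.children j, aggMatrix T k c * yhat c = _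
  ring

lemma Fmat_zero_offdiag (T : TreeHierarchy N K) (yhat : Fin N → ℝ) {k j : Fin K}
    (hkj : k ≠ j) (hle : T.height (T.parent j) ≤ T.height (T.parent k)) :
    Fmat T yhat 0 k j = 0 := by
  simp only [Fmat, mul_zero, zero_sub, neg_eq_zero]
  apply Finset.sum_eq_zero
  intro c hc
  have h1 : c ≠ T.parent k := by
    intro h
    have := T.height_child j c hc
    rw [h] at this
    omega
  have h2 : c ∉ T.children k := fun h => hkj (T.child_unique k j c h hc)
  simp [aggMatrix, h1, h2]

lemma Fmat_zero_diag (T : TreeHierarchy N K) (yhat : Fin N → ℝ) (hy : ∀ n, 0 < yhat n)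
    (k : Fin K) : 0 < Fmat T yhat 0 k k := by
  simp only [Fmat, mul_zero, zero_sub]
  have h : ∀ c ∈ T.children k, aggMatrix T k c * yhat c = -yhat c := by
    intro c hc
    have h1 : c ≠ T.parent k := fun h => T.parent_notMem k (h ▸ hc)
    simp [aggMatrix, h1, hc]
  rw [Finset.sum_congr rfl h, Finset.sum_neg_distrib, neg_neg]
  exact Finset.sum_pos (fun c _ => hy c) (T.children_nonempty k)

lemma Fmat_zero_det_pos (T : TreeHierarchy N K) (yhat : Fin N → ℝ) (hy : ∀ n, 0 < yhat n) :
    0 < (Fmat T yhat 0).det := by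
  classical
  set σ := Tuple.sort (fun k : Fin K => T.height (T.parent k)) with hσ
  have htri : ((Fmat T yhat 0).submatrix σ σ).BlockTriangular id := by
    intro i j hij
    have hne : σ i ≠ σ j := fun h => (ne_of_gt hij) (σ.injective h)
    have hmono : T.height (T.parent (σ j)) ≤ T.height (T.parent (σ i)) :=
      Tuple.monotone_sort (fun k : Fin K => T.height (T.parent k)) (le_of_lt hij)
    exact Fmat_zero_offdiag T yhat hne hmono
  have hsub : ((Fmat T yhat 0).submatrix σ σ).det = (Fmat T yhat 0).det :=
    Matrix.det_submatrix_equiv_self σ _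
  rw [← hsub, Matrix.det_of_upperTriangular htri]
  exact Finset.prod_pos fun i _ => Fmat_zero_diag T yhat hy (σ i)

lemma lamTop_div_eq (T : TreeHierarchy N K) (yhat : Fin N → ℝ) (hy : ∀ n, 0 < yhat n)
    {M : ℝ} (hM : 0 < M) (k : Fin K) :
    lamTop T yhat M k / M ^ (T.height (T.parent k) - 1)
      = (Fmat T yhat M⁻¹)⁻¹.mulVec ((aggMatrix T).mulVec yhat) k := by
  have hD : (Matrix.diagonal (fun j : Fin K => M ^ (T.height (T.parent j) - 1)))⁻¹
      = Matrix.diagonal (fun j : Fin K => (M ^ (T.height (T.parent j) - 1))⁻¹) := by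
    apply Matrix.inv_eq_right_inv
    rw [Matrix.diagonal_mul_diagonal]
    have h : (fun j : Fin K => M ^ (T.height (T.parent j) - 1) * (M ^ (T.height (T.parent j) - 1))⁻¹)
        = fun _ : Fin K => (1:ℝ) := funext fun j => mul_inv_cancel₀ (pow_ne_zero _ hM.ne')
    rw [h, Matrix.diagonal_one]
  rw [Fmat_eq T yhat hy hM, Matrix.mul_inv_rev, hD, ← Matrix.mulVec_mulVec,
    Matrix.mulVec_diagonal, lamTop, div_eq_inv_mul]

/-- With top-heavy weights, `λ_k(M) / M^(H(p_k) - 1)` converges to a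
finite limit as `M → ∞`. -/
theorem height_lambdas_converge (T : TreeHierarchy N K) (yhat : Fin N → ℝ)
    (hy : ∀ n, 0 < yhat n)
    (hinv : ∀ M : ℝ, 0 < M →
      IsUnit (aggMatrix T * (topW T yhat M)⁻¹ * (aggMatrix T)ᵀ).det)
    (k : Fin K) :
    ∃ L : ℝ, Tendsto (fun M : ℝ => lamTop T yhat M k / M ^ (T.height (T.parent k) - 1))
      atTop (𝓝 L) := by
  classical
  set v : Fin K → ℝ := (aggMatrix T).mulVec yhat with hv
  set g : ℝ → ℝ := fun t => (Fmat T yhat t)⁻¹.mulVec v k with hg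
  have hFc : Continuous fun t => Fmat T yhat t := by
    apply continuous_matrix
    intro i j
    exact (continuous_const.mul continuous_id).sub continuous_const
  have hcg : ContinuousAt g 0 := by
    have hdet : Continuous fun t => (Fmat T yhat t).det := hFc.matrix_det
    have hadj : Continuous fun t => (Fmat T yhat t).adjugate.mulVec v k :=
      (continuous_apply k).comp (hFc.matrix_adjugate.matrix_mulVec continuous_const)
    have hne : (Fmat T yhat 0).det ≠ 0 := (Fmat_zero_det_pos T yhat hy).ne'
    have hrw : g = fun t => ((Fmat T yhat t).det)⁻¹ *
        ((Fmat T yhat t).adjugate.mulVec v k) := by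
      funext t
      simp only [hg, Matrix.inv_def, Matrix.smul_mulVec, Pi.smul_apply,
        smul_eq_mul, Ring.inverse_eq_inv]
    rw [hrw]
    exact (hdet.continuousAt.inv₀ hne).mul hadj.continuousAt
  refine ⟨g 0, Tendsto.congr' ?_ (hcg.tendsto.comp tendsto_inv_atTop_zero)⟩
  filter_upwards [eventually_gt_atTop (0 : ℝ)] with M hM
  exact (lamTop_div_eq T yhat hy hM k).symm
end

section
/- Let H be a strict tree-based hierarchy with canonical aggregation matrix A, positive initial predictions ŷ, and bottom-heavy weight matrices W(M). Then for every constraint index k (1 ≤ k ≤ K): (1) the ratio λ_k(M)/M^{D(p_k)+1} tends to 0 as M → ∞, and (2) the limit lim_{M→∞} λ_k(M)/M^{D(p_k)} exists and is finite. -/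
open Matrix Filter Topology

variable {N K : ℕ}

/-!
Rescale the normal equations by `S(M) = diag(M^{D(p_j)})`: then `λ(M) = S(M) C(M⁻¹)⁻¹ A ŷ` with
`C(t) = A diag(ŷ) (P + t Q)ᵀ`, where `A = P + Q` splits `A` into its parent and child entries
(children sit one level deeper than their parent, whence the factor `t = M⁻¹` on `Q`).
As `M → ∞`, `C(M⁻¹) → C(0)`, and `C(0)_{kj} = A_{k,p_j} ŷ_{p_j}` vanishes off the diagonal whenever
`D(p_j) ≤ D(p_k)`, because parents are distinct and children are deeper. Hence `C(0)` is invertible,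
and `λ_k(M) / M^{D(p_k)} → (C(0)⁻¹ A ŷ)_k`, which also gives `λ_k(M) / M^{D(p_k)+1} → 0`.
-/

lemma Matrix.det_ne_zero_of_apply_eq_zero_of_le {ι R β : Type*} [Fintype ι] [DecidableEq ι] [Field R]
    [LinearOrder β] (C : Matrix ι ι R) (r : ι → β) (hdiag : ∀ k, C k k ≠ 0)
    (hoff : ∀ k j, j ≠ k → r j ≤ r k → C k j = 0) : C.det ≠ 0 := by
  classical
  intro hdet
  obtain ⟨v, hv, hCv⟩ := Matrix.exists_mulVec_eq_zero_iff.mpr hdet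
  have hsupp : (Finset.univ.filter fun j => v j ≠ 0).Nonempty := by
    obtain ⟨j, hj⟩ := Function.ne_iff.mp hv
    exact ⟨j, by simpa using hj⟩
  -- a row whose index maximizes `r` on the support of `v` sees only its diagonal entry
  obtain ⟨k, hk, hmax⟩ := Finset.exists_max_image _ r hsupp
  have hrow : ∑ j, C k j * v j = C k k * v k := by
    refine Finset.sum_eq_single k (fun j _ hjk => ?_) (by simp)
    by_cases hvj : v j = 0
    · rw [hvj, mul_zero]
    · rw [hoff k j hjk (hmax j (by simpa using hvj)), zero_mul]
  have : C k k * v k = 0 := by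
    rw [← hrow]
    exact congrFun hCv k
  exact (mul_ne_zero (hdiag k) (by simpa using hk)) this

lemma tendsto_div_pow_succ_atTop_zero {f : ℝ → ℝ} {d : ℕ} {L : ℝ}
    (h : Tendsto (fun x => f x / x ^ d) atTop (𝓝 L)) :
    Tendsto (fun x => f x / x ^ (d + 1)) atTop (𝓝 0) := by
  have := h.mul tendsto_inv_atTop_zero
  rw [mul_zero] at this
  refine this.congr fun x => ?_
  rw [pow_succ, ← div_div, div_eq_mul_inv (f x / x ^ d)]

namespace DepthHierarchy

variable (T : DepthHierarchy N K)

noncomputable def parentMatrix : Matrix (Fin K) (Fin N) ℝ :=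
  fun k n => if n = T.parent k then 1 else 0

noncomputable def childMatrix : Matrix (Fin K) (Fin N) ℝ :=
  fun k n => if n ∈ T.children k then -1 else 0

lemma aggMatrixD_apply_parent (k : Fin K) : aggMatrixD T k (T.parent k) = 1 := by
  simp [aggMatrixD]

lemma aggMatrixD_apply_parent_eq_zero (hstrict : Function.Injective T.parent) {j k : Fin K}
    (hjk : j ≠ k) (hd : T.depth (T.parent j) ≤ T.depth (T.parent k)) :
    aggMatrixD T k (T.parent j) = 0 := by
  have hchild : T.parent j ∉ T.children k := fun h => by
    have := T.depth_child k _ h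
    omega
  simp [aggMatrixD, hstrict.ne hjk, hchild]

lemma diagonal_mul_aggMatrixD_transpose_mul_diagonal {M : ℝ} (hM : M ≠ 0) :
    diagonal (fun n => (M ^ T.depth n)⁻¹) * (aggMatrixD T)ᵀ *
        diagonal (fun j => M ^ T.depth (T.parent j)) =
      (parentMatrix T)ᵀ + M⁻¹ • (childMatrix T)ᵀ := by
  ext n j
  simp only [diagonal_mul, mul_diagonal, transpose_apply, Matrix.add_apply, Matrix.smul_apply,
    smul_eq_mul, aggMatrixD, parentMatrix, childMatrix]
  by_cases hp : n = T.parent j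
  · subst hp
    simp [T.parent_notMem j, pow_ne_zero _ hM]
  · by_cases hc : n ∈ T.children j
    · simp only [hp, hc, if_true, if_false, T.depth_child j n hc, pow_succ]
      field_simp
      ring
    · simp [hp, hc]

variable (yhat : Fin N → ℝ)

noncomputable def rescaledGram (t : ℝ) : Matrix (Fin K) (Fin K) ℝ :=
  aggMatrixD T * diagonal yhat * ((parentMatrix T)ᵀ + t • (childMatrix T)ᵀ)

lemma continuous_rescaledGram : Continuous (rescaledGram T yhat) := by
  unfold rescaledGram
  fun_prop

lemma rescaledGram_zero_apply (k j : Fin K) :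
    rescaledGram T yhat 0 k j = aggMatrixD T k (T.parent j) * yhat (T.parent j) := by
  simp [rescaledGram, parentMatrix, mul_apply, diagonal_apply]

lemma det_rescaledGram_zero_ne_zero (hstrict : Function.Injective T.parent)
    (hy : ∀ n, yhat n ≠ 0) : (rescaledGram T yhat 0).det ≠ 0 :=
  det_ne_zero_of_apply_eq_zero_of_le _ (fun j => T.depth (T.parent j))
    (fun k => by simp [rescaledGram_zero_apply, aggMatrixD_apply_parent, hy])
    (fun k j hjk hd => by
      rw [rescaledGram_zero_apply, aggMatrixD_apply_parent_eq_zero T hstrict hjk hd, zero_mul])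

lemma bottomW_inv (hy : ∀ n, yhat n ≠ 0) {M : ℝ} (hM : M ≠ 0) :
    (bottomW T yhat M)⁻¹ = diagonal yhat * diagonal (fun n => (M ^ T.depth n)⁻¹) := by
  rw [diagonal_mul_diagonal]
  refine inv_eq_right_inv ?_
  rw [bottomW, diagonal_mul_diagonal, ← diagonal_one]
  congr 1
  ext n
  field_simp [hy n, pow_ne_zero _ hM]

lemma lamBot_eq_diagonal_mulVec (hy : ∀ n, yhat n ≠ 0) {M : ℝ} (hM : M ≠ 0) :
    lamBot T yhat M = diagonal (fun j => M ^ T.depth (T.parent j)) *ᵥ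
      ((rescaledGram T yhat M⁻¹)⁻¹ *ᵥ (aggMatrixD T *ᵥ yhat)) := by
  set S := diagonal fun j => M ^ T.depth (T.parent j)
  set B := aggMatrixD T * (bottomW T yhat M)⁻¹ * (aggMatrixD T)ᵀ
  have hS : IsUnit S.det := by
    simp [S, det_diagonal, Finset.prod_ne_zero_iff, pow_ne_zero _ hM]
  have hgram : rescaledGram T yhat M⁻¹ = B * S := by
    rw [rescaledGram, ← diagonal_mul_aggMatrixD_transpose_mul_diagonal T hM]
    simp only [B, S, bottomW_inv T yhat hy hM, Matrix.mul_assoc]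
  rw [hgram, mulVec_mulVec, Matrix.mul_inv_rev, ← Matrix.mul_assoc, mul_nonsing_inv S hS,
    Matrix.one_mul, lamBot]

lemma tendsto_lamBot_div_pow (hstrict : Function.Injective T.parent) (hy : ∀ n, yhat n ≠ 0)
    (k : Fin K) :
    Tendsto (fun M : ℝ => lamBot T yhat M k / M ^ T.depth (T.parent k)) atTop
      (𝓝 (((rescaledGram T yhat 0)⁻¹ *ᵥ (aggMatrixD T *ᵥ yhat)) k)) := by
  have hinv : ContinuousAt Inv.inv (rescaledGram T yhat 0) := by
    refine continuousAt_matrix_inv _ ?_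
    rw [Ring.inverse_eq_inv']
    exact continuousAt_inv₀ (det_rescaledGram_zero_ne_zero T yhat hstrict hy)
  have hgram : Tendsto (fun M : ℝ => (rescaledGram T yhat M⁻¹)⁻¹) atTop
      (𝓝 (rescaledGram T yhat 0)⁻¹) :=
    hinv.tendsto.comp (((continuous_rescaledGram T yhat).tendsto 0).comp tendsto_inv_atTop_zero)
  have hmulVec : Tendsto (fun M : ℝ => (rescaledGram T yhat M⁻¹)⁻¹ *ᵥ (aggMatrixD T *ᵥ yhat))
      atTop (𝓝 ((rescaledGram T yhat 0)⁻¹ *ᵥ (aggMatrixD T *ᵥ yhat))) :=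
    ((continuous_id.matrix_mulVec continuous_const).tendsto _).comp hgram
  refine (tendsto_pi_nhds.1 hmulVec k).congr' ?_
  filter_upwards [eventually_ne_atTop 0] with M hM
  rw [lamBot_eq_diagonal_mulVec T yhat hy hM, mulVec_diagonal]
  exact (mul_div_cancel_left₀ _ (pow_ne_zero _ hM)).symm

end DepthHierarchy

theorem depth_lambdas_converge_general (T : DepthHierarchy N K)
    (hstrict : Function.Injective T.parent) (yhat : Fin N → ℝ)
    (hy : ∀ n, 0 < yhat n)
    (k : Fin K) :
    Tendsto (fun M : ℝ => lamBot T yhat M k / M ^ (T.depth (T.parent k) + 1))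
      atTop (𝓝 0) ∧
    ∃ L : ℝ, Tendsto (fun M : ℝ => lamBot T yhat M k / M ^ T.depth (T.parent k))
      atTop (𝓝 L) := by
  have h := T.tendsto_lamBot_div_pow yhat hstrict (fun n => (hy n).ne') k
  exact ⟨tendsto_div_pow_succ_atTop_zero h, _, h⟩

/-- For a strict tree-based hierarchy with bottom-heavy weights,
`λ_k(M) / M^(D(p_k) + 1) → 0` as `M → ∞`, and consequently
`λ_k(M) / M^(D(p_k))` converges to a finite limit. -/
theorem depth_lambdas_converge (T : DepthHierarchy N K)
    (hstrict : Function.Injective T.parent) (yhat : Fin N → ℝ)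
    (hy : ∀ n, 0 < yhat n)
    (hinv : ∀ M : ℝ, 0 < M →
      IsUnit (aggMatrixD T * (bottomW T yhat M)⁻¹ * (aggMatrixD T)ᵀ).det)
    (k : Fin K) :
    Tendsto (fun M : ℝ => lamBot T yhat M k / M ^ (T.depth (T.parent k) + 1))
      atTop (𝓝 0) ∧
    ∃ L : ℝ, Tendsto (fun M : ℝ => lamBot T yhat M k / M ^ T.depth (T.parent k))
      atTop (𝓝 L) :=
  depth_lambdas_converge_general T hstrict yhat hy k
end

section
/- Let A be the canonical aggregation matrix of a tree-based hierarchy with K constraints on N items. Then A has full row rank K. Moreover, each column of A has at most one entry equal to −1, and if the hierarchy is strict, each column of A also has at most one entry equal to +1. -/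
open Matrix Filter Topology

variable {N K : ℕ}

/-!
Order the rows of `A` by the height of their parent item and pick, for row `k`, a child `c` of
`p_k` as pivot. Column `c` has its only `-1` in row `k` (each item is a child at most once) and its
`+1` entries in rows with parent `c`, whose height is one less than that of `p_k`. Hence in a
vanishing combination of rows every coefficient is zero, by induction on the height.
-/

theorem Matrix.linearIndependent_row_of_pivot {ι α β R : Type*} [Fintype ι] [Ring R]
    [NoZeroDivisors R] [Preorder β] [WellFoundedLT β] (M : Matrix ι α R) (rank : ι → β)
    (pivot : ι → α) (hpivot : ∀ k, M k (pivot k) ≠ 0)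
    (hbelow : ∀ j k, j ≠ k → M j (pivot k) ≠ 0 → rank j < rank k) :
    LinearIndependent R M.row := by
  rw [Fintype.linearIndependent_iff]
  intro g hg k
  induction k using (InvImage.wf rank wellFounded_lt).induction with
  | _ k ih =>
    have hcol := congrFun hg (pivot k)
    simp only [Finset.sum_apply, Pi.smul_apply, smul_eq_mul, Pi.zero_apply,
      Matrix.row_apply] at hcol
    rw [Finset.sum_eq_single k (fun j _ hjk => ?_) (by simp)] at hcol
    · exact (mul_eq_zero.1 hcol).resolve_right (hpivot k)
    · by_cases hjc : M j (pivot k) = 0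
      · rw [hjc, mul_zero]
      · rw [ih j (hbelow j k hjk hjc), zero_mul]

section AggMatrix

variable (T : TreeHierarchy N K) {k : Fin K} {n : Fin N}

theorem aggMatrix_eq_one_iff : aggMatrix T k n = 1 ↔ n = T.parent k := by
  unfold aggMatrix
  split_ifs <;> norm_num [*]

theorem aggMatrix_eq_neg_one_iff : aggMatrix T k n = -1 ↔ n ∈ T.children k := by
  unfold aggMatrix
  split_ifs with hp <;> norm_num [*]
  exact hp ▸ T.parent_notMem k

theorem aggMatrix_ne_zero_iff :
    aggMatrix T k n ≠ 0 ↔ n = T.parent k ∨ n ∈ T.children k := by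
  unfold aggMatrix
  split_ifs <;> simp_all

theorem linearIndependent_aggMatrix : LinearIndependent ℝ (aggMatrix T).row := by
  refine (aggMatrix T).linearIndependent_row_of_pivot (fun k => T.height (T.parent k))
    (fun k => (T.children_nonempty k).choose) (fun k => ?_) (fun j k hjk hne => ?_)
  · exact (aggMatrix_ne_zero_iff T).2 (Or.inr (T.children_nonempty k).choose_spec)
  · have hc := (T.children_nonempty k).choose_spec
    rcases (aggMatrix_ne_zero_iff T).1 hne with hpar | hchild
    · have := T.height_child k _ hc
      rw [← hpar]
      omega
    · exact absurd (T.child_unique j k _ hchild hc) hjk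

end AggMatrix

/-- The canonical aggregation matrix of a tree-based hierarchy has full row
rank `K`; each column has at most one entry equal to `-1`; and if the hierarchy is strict
(each item is the parent of at most one constraint), each column also has at most one
entry equal to `+1`. -/
theorem aggMatrix_full_rank_and_columns (T : TreeHierarchy N K) :
    (aggMatrix T).rank = K ∧
    (∀ n : Fin N, ∀ i j : Fin K,
      aggMatrix T i n = -1 → aggMatrix T j n = -1 → i = j) ∧
    (Function.Injective T.parent →
      ∀ n : Fin N, ∀ i j : Fin K,
        aggMatrix T i n = 1 → aggMatrix T j n = 1 → i = j) := by
  refine ⟨(linearIndependent_aggMatrix T).rank_matrix.trans (Fintype.card_fin K), ?_, ?_⟩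
  · intro n i j hi hj
    exact T.child_unique i j n ((aggMatrix_eq_neg_one_iff T).1 hi)
      ((aggMatrix_eq_neg_one_iff T).1 hj)
  · intro hinj n i j hi hj
    exact hinj (((aggMatrix_eq_one_iff T).1 hi).symm.trans ((aggMatrix_eq_one_iff T).1 hj))
end
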